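/- Let λ_{(1)} < … < λ_{(N)} be real numbers, b ∈ ℝ, and let μ_N = (1/(N−1)) Σ_{k=1}^{N−1} δ_{λ_{(N)} − λ_{(k)}} and μ^{(N)} = (1/N) Σ_{k=1}^N δ_{λ_{(k)}}. Then the bounded-Lipschitz distance satisfies d(μ_N, τ_b μ^{(N)}) ≤ |λ_{(N)} − b| + 2/N, where τ_b μ^{(N)} is the pushforward of μ^{(N)} by x ↦ b − x. -/

import Mathlib

open MeasureTheory

/-- Bounded-Lipschitz distance. -/
noncomputable def blDist (μ ν : Measure ℝ) : ℝ :=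
  ⨆ f : {f : ℝ → ℝ // LipschitzWith 1 f ∧ ∀ x, |f x| ≤ 1},
    |∫ x, f.1 x ∂μ - ∫ x, f.1 x ∂ν|

/-!
Test against a 1-Lipschitz `f` with `|f| ≤ 1`. The atoms `λ₍N₎ - λ₍k₎`, `k ≤ N - 1`, of `μ_N`
are the atoms `b - λ₍k₎` of the reflected empirical measure translated by `λ₍N₎ - b`, so pairing them
costs at most `|λ₍N₎ - b|`. What remains is the unpaired atom `b - λ₍N₎` and the change of
weight from `1/(N-1)` to `1/N`, each costing at most `1/N`.
-/

theorem integral_smul_sum_dirac {α ι E : Type*} [MeasurableSpace α] [MeasurableSingletonClass α]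
    [Fintype ι] [NormedAddCommGroup E] [NormedSpace ℝ E] [CompleteSpace E] (f : α → E)
    (x : ι → α) (c : ENNReal) :
    ∫ y, f y ∂(c • ∑ i, Measure.dirac (x i)) = c.toReal • ∑ i, f (x i) := by
  rw [integral_smul_measure, integral_finsetSum_measure fun i _ ↦ integrable_dirac (by simp)]
  simp only [integral_dirac]

theorem blDist_le {μ ν : Measure ℝ} {C : ℝ}
    (h : ∀ f : ℝ → ℝ, LipschitzWith 1 f → (∀ x, |f x| ≤ 1) → |∫ x, f x ∂μ - ∫ x, f x ∂ν| ≤ C) :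
    blDist μ ν ≤ C := by
  unfold blDist
  have : Nonempty {f : ℝ → ℝ // LipschitzWith 1 f ∧ ∀ x, |f x| ≤ 1} :=
    ⟨⟨fun _ ↦ 0, LipschitzWith.const' 0, by simp⟩⟩
  exact ciSup_le fun f ↦ h f.1 f.2.1 f.2.2

theorem abs_inv_mul_sum_sub_le {n : ℕ} (a b : Fin n → ℝ) {d : ℝ} (hd : 0 ≤ d)
    (h : ∀ i, |a i - b i| ≤ d) : |(n : ℝ)⁻¹ * ∑ i, a i - (n : ℝ)⁻¹ * ∑ i, b i| ≤ d := by
  rcases n.eq_zero_or_pos with rfl | hn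
  · simpa using hd
  rw [← mul_sub, abs_mul, abs_inv, Nat.abs_cast, inv_mul_le_iff₀ (by positivity),
    ← Finset.sum_sub_distrib]
  simpa using (Finset.abs_sum_le_sum_abs _ _).trans
    (Finset.sum_le_card_nsmul Finset.univ _ d fun i _ ↦ h i)

theorem abs_inv_mul_sum_sub_inv_mul_sum_castSucc_le {n : ℕ} (g : Fin (n + 1) → ℝ)
    (hg : ∀ i, |g i| ≤ 1) :
    |(n : ℝ)⁻¹ * ∑ i : Fin n, g (Fin.castSucc i) - ((n : ℝ) + 1)⁻¹ * ∑ i, g i| ≤ 2 / (n + 1) := by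
  set S := ∑ i : Fin n, g i.castSucc
  have hS : |(n : ℝ)⁻¹ * S| ≤ 1 := by
    simpa [S] using abs_inv_mul_sum_sub_le (fun i ↦ g (Fin.castSucc i)) 0 zero_le_one
      (by simpa using fun i ↦ hg (Fin.castSucc i))
  have key : (n : ℝ)⁻¹ * S - ((n : ℝ) + 1)⁻¹ * (S + g (Fin.last n)) =
      ((n : ℝ)⁻¹ * S - g (Fin.last n)) / (n + 1) := by
    rcases n.eq_zero_or_pos with rfl | hn
    · simp [S]
    field_simp
    ring
  rw [Fin.sum_univ_castSucc, key, abs_div, abs_of_pos (by positivity : (0 : ℝ) < n + 1),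
    div_le_div_iff_of_pos_right (by positivity)]
  linarith [abs_sub ((n : ℝ)⁻¹ * S) (g (Fin.last n)), hg (Fin.last n)]

/-- For ordered reals `λ₍₁₎ < … < λ₍N₎` and `b ∈ ℝ`, the bounded-Lipschitz distance
between `μ_N = (N-1)⁻¹ ∑_{k<N} δ_{λ₍N₎-λ₍k₎}` and the reflection by `x ↦ b - x` of the
empirical measure `μ^{(N)} = N⁻¹ ∑_k δ_{λ₍k₎}` is at most `|λ₍N₎ - b| + 2/N`. -/
theorem stmt12 (N : ℕ) (hN : 2 ≤ N) (lam : Fin N → ℝ) (b : ℝ) :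
    blDist
      (((N : ENNReal) - 1)⁻¹ •
        ∑ k : Fin (N - 1),
          Measure.dirac (lam ⟨N - 1, by omega⟩ - lam (Fin.castLE (by omega) k)))
      ((((N : ENNReal))⁻¹ • ∑ k : Fin N, Measure.dirac (lam k)).map fun x => b - x)
      ≤ |lam ⟨N - 1, by omega⟩ - b| + 2 / N := by
  obtain ⟨n, rfl⟩ : ∃ n, N = n + 1 := ⟨N - 1, by omega⟩
  refine blDist_le fun f hf hf1 ↦ ?_
  rw [integral_map (by fun_prop) hf.continuous.aestronglyMeasurable, integral_smul_sum_dirac,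
    integral_smul_sum_dirac, Nat.cast_add_one, ENNReal.add_sub_cancel_right ENNReal.one_ne_top]
  simp only [smul_eq_mul, ENNReal.toReal_inv, ENNReal.toReal_natCast, ENNReal.toReal_one,
    ENNReal.toReal_add (ENNReal.natCast_ne_top n) ENNReal.one_ne_top]
  set Λ := lam (Fin.last n)
  calc _ ≤ |(n : ℝ)⁻¹ * ∑ i : Fin n, f (Λ - lam i.castSucc)
          - (n : ℝ)⁻¹ * ∑ i : Fin n, f (b - lam i.castSucc)|
        + |(n : ℝ)⁻¹ * ∑ i : Fin n, f (b - lam i.castSucc)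
          - ((n : ℝ) + 1)⁻¹ * ∑ i, f (b - lam i)| :=
      abs_sub_le _ _ _
    _ ≤ |Λ - b| + 2 / (n + 1) := by
      refine add_le_add ?_ ?_
      · exact abs_inv_mul_sum_sub_le _ _ (abs_nonneg _) fun i ↦ by
          simpa [Real.dist_eq] using hf.dist_le_mul (Λ - lam i.castSucc) (b - lam i.castSucc)
      · exact abs_inv_mul_sum_sub_inv_mul_sum_castSucc_le (fun i ↦ f (b - lam i)) fun i ↦ hf1 _
    _ = _ := by push_cast; rfl
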